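/- arXiv:2603.28748 — 3 statements merged into one kernel-verified Lean document; each statement's English description precedes it below -/
import Mathlib

section
/- For all integers s ≥ 2 and t ≥ 2, the odd Hadwiger number of the Cartesian product of two complete graphs satisfies oh(K_s □ K_t) ≥ s + t − 2. -/
open SimpleGraph

/-- `H` is an odd minor of `G`: there are pairwise vertex-disjoint subtrees of `G`, one for
each vertex of `H`, and a 2-colouring of the vertices which is proper on each tree, such that
for every edge of `H` there is a monochromatic edge of `G` between the corresponding trees. -/
def IsOddMinorOf {W V : Type*} (H : SimpleGraph W) (G : SimpleGraph V) : Prop :=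
  ∃ (T : W → G.Subgraph) (c : V → Fin 2),
    (∀ w, (T w).coe.IsTree) ∧
    (Pairwise fun w w' => Disjoint (T w).verts (T w').verts) ∧
    (∀ w, ∀ x y, (T w).Adj x y → c x ≠ c y) ∧
    (∀ w w', H.Adj w w' →
      ∃ x y, x ∈ (T w).verts ∧ y ∈ (T w').verts ∧ G.Adj x y ∧ c x = c y)

/-- The odd Hadwiger number of `G`: the largest `r` such that `K_r` is an odd minor of `G`. -/
noncomputable def oddHadwiger {V : Type*} [Fintype V] (G : SimpleGraph V) : ℕ :=
  sSup {r : ℕ | IsOddMinorOf (⊤ : SimpleGraph (Fin r)) G}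

/-- The Cartesian product `G □ H`. -/
def cartProd {α β : Type*} (G : SimpleGraph α) (H : SimpleGraph β) : SimpleGraph (α × β) where
  Adj x y := (x.1 = y.1 ∧ H.Adj x.2 y.2) ∨ (x.2 = y.2 ∧ G.Adj x.1 y.1)
  symm := by
    constructor
    rintro x y (⟨h1, h2⟩ | ⟨h1, h2⟩)
    · exact Or.inl ⟨h1.symm, h2.symm⟩
    · exact Or.inr ⟨h1.symm, h2.symm⟩
  loopless := by
    constructor
    rintro x (⟨_, h⟩ | ⟨_, h⟩)
    · exact H.irrefl h
    · exact G.irrefl h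

/-- The strong product `G ⊠ H`. -/
def strongProd {α β : Type*} (G : SimpleGraph α) (H : SimpleGraph β) : SimpleGraph (α × β) where
  Adj x y := (x.1 = y.1 ∧ H.Adj x.2 y.2) ∨ (x.2 = y.2 ∧ G.Adj x.1 y.1) ∨
    (G.Adj x.1 y.1 ∧ H.Adj x.2 y.2)
  symm := by
    constructor
    rintro x y (⟨h1, h2⟩ | ⟨h1, h2⟩ | ⟨h1, h2⟩)
    · exact Or.inl ⟨h1.symm, h2.symm⟩
    · exact Or.inr (Or.inl ⟨h1.symm, h2.symm⟩)
    · exact Or.inr (Or.inr ⟨h1.symm, h2.symm⟩)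
  loopless := by
    constructor
    rintro x (⟨_, h⟩ | ⟨_, h⟩ | ⟨h, _⟩)
    · exact H.irrefl h
    · exact G.irrefl h
    · exact G.irrefl h

/-- The lexicographic product `G ∘ H`. -/
def lexProd {α β : Type*} (G : SimpleGraph α) (H : SimpleGraph β) : SimpleGraph (α × β) where
  Adj x y := G.Adj x.1 y.1 ∨ (x.1 = y.1 ∧ H.Adj x.2 y.2)
  symm := by
    constructor
    rintro x y (h | ⟨h1, h2⟩)
    · exact Or.inl h.symm
    · exact Or.inr ⟨h1.symm, h2.symm⟩
  loopless := by
    constructor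
    rintro x (h | ⟨_, h⟩)
    · exact G.irrefl h
    · exact H.irrefl h

/-- The direct (tensor) product `G × H`. -/
def dirProd {α β : Type*} (G : SimpleGraph α) (H : SimpleGraph β) : SimpleGraph (α × β) where
  Adj x y := G.Adj x.1 y.1 ∧ H.Adj x.2 y.2
  symm := by
    constructor
    rintro x y ⟨h1, h2⟩
    exact ⟨h1.symm, h2.symm⟩
  loopless := by
    constructor
    rintro x ⟨h, _⟩
    exact G.irrefl h

/-!
Each vertex `a` of the first factor contributes the edge `{(a, b₀), (a, b₁)}` as a branch set, and
each further vertex `b` of the second factor contributes the whole copy `{(·, b)}` of the first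
factor, a star centred at `(a₀, b)`. Colour `(·, b₀)` with `0`, `(·, b₁)` with `1`, and in every
other copy `(a₀, b)` with `0` and the rest with `1`; this is proper on every branch set. Two edges
then meet monochromatically along `b₀`, two copies along `a₀`, and the edge at `a` meets the copy
at `b` through `(a₀, b₀) ~ (a₀, b)` if `a = a₀` and through `(a, b₁) ~ (a, b)` otherwise.
-/

namespace SimpleGraph

variable {V : Type*} {G : SimpleGraph V}

theorem isAcyclic_of_forall_adj_eq_or_eq (v : V) (h : ∀ ⦃x y⦄, G.Adj x y → x = v ∨ y = v) :
    G.IsAcyclic := by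
  have key : ∀ ⦃x⦄, G.Adj v x → G.IsBridge s(v, x) := by
    intro x hvx
    rw [isBridge_iff]
    rintro ⟨p⟩
    cases p.reverse with
    | nil => exact G.loopless.irrefl _ hvx
    | cons hxz _ =>
      rw [deleteEdges_adj] at hxz
      rcases h hxz.1 with rfl | rfl
      · exact G.loopless.irrefl _ hvx
      · exact hxz.2 (by simp [Sym2.eq_swap])
  rw [isAcyclic_iff_forall_adj_isBridge]
  intro x y hxy
  rcases h hxy with rfl | rfl
  · exact key hxy
  · rw [Sym2.eq_swap]; exact key hxy.symm

theorem isTree_of_forall_adj_eq_or_eq (v : V) (hv : ∀ x, x ≠ v → G.Adj v x)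
    (h : ∀ ⦃x y⦄, G.Adj x y → x = v ∨ y = v) : G.IsTree := by
  refine ⟨(connected_iff_exists_forall_reachable G).2 ⟨v, fun x => ?_⟩,
    isAcyclic_of_forall_adj_eq_or_eq v h⟩
  by_cases hx : x = v
  · rw [hx]
  · exact (hv x hx).reachable

def starSubgraph (G : SimpleGraph V) (S : Set V) (v : V) : G.Subgraph where
  verts := S
  Adj x y := x ∈ S ∧ y ∈ S ∧ G.Adj x y ∧ (x = v ∨ y = v)
  adj_sub h := h.2.2.1
  edge_vert h := h.1
  symm := ⟨fun _ _ h => ⟨h.2.1, h.1, h.2.2.1.symm, h.2.2.2.symm⟩⟩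

@[simp]
theorem starSubgraph_verts (S : Set V) (v : V) : (G.starSubgraph S v).verts = S := rfl

@[simp]
theorem starSubgraph_adj {S : Set V} {v x y : V} :
    (G.starSubgraph S v).Adj x y ↔ x ∈ S ∧ y ∈ S ∧ G.Adj x y ∧ (x = v ∨ y = v) := .rfl

theorem starSubgraph_isTree {S : Set V} {v : V} (hv : v ∈ S)
    (hadj : ∀ x ∈ S, x ≠ v → G.Adj v x) : (G.starSubgraph S v).coe.IsTree := by
  refine isTree_of_forall_adj_eq_or_eq ⟨v, hv⟩ (fun x hx => ?_) (fun x y hxy => ?_)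
  · have hne : (x : V) ≠ v := fun h => hx (Subtype.ext h)
    exact ⟨hv, x.2, hadj x x.2 hne, Or.inl rfl⟩
  · exact (starSubgraph_adj.1 hxy).2.2.2.imp Subtype.ext Subtype.ext

end SimpleGraph

section OddMinor

variable {W W' V : Type*} {H : SimpleGraph W} {G : SimpleGraph V}

theorem isOddMinorOf_of_stars (S : W → Set V) (v : W → V) (c : V → Fin 2)
    (hv : ∀ w, v w ∈ S w) (hadj : ∀ w, ∀ x ∈ S w, x ≠ v w → G.Adj (v w) x)
    (hc : ∀ w, ∀ x ∈ S w, x ≠ v w → c x ≠ c (v w))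
    (hdisj : Pairwise fun w w' => Disjoint (S w) (S w'))
    (hedge : ∀ w w', H.Adj w w' → ∃ x ∈ S w, ∃ y ∈ S w', G.Adj x y ∧ c x = c y) :
    IsOddMinorOf H G := by
  refine ⟨fun w => G.starSubgraph (S w) (v w), c, fun w => starSubgraph_isTree (hv w) (hadj w),
    by simpa using hdisj, fun w x y h => ?_, fun w w' h => ?_⟩
  · obtain ⟨hx, hy, hxy, rfl | rfl⟩ := starSubgraph_adj.1 h
    · exact (hc w y hy hxy.ne.symm).symm
    · exact hc w x hx hxy.ne
  · obtain ⟨x, hx, y, hy, hxy⟩ := hedge w w' h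
    exact ⟨x, y, hx, hy, hxy⟩

theorem IsOddMinorOf.comap {H' : SimpleGraph W'} (h : IsOddMinorOf H G) (f : H' ↪g H) :
    IsOddMinorOf H' G := by
  obtain ⟨T, c, htree, hdisj, hc, hedge⟩ := h
  exact ⟨T ∘ f, c, fun w => htree (f w), fun w w' h => hdisj (f.injective.ne h), fun w => hc (f w),
    fun w w' h => hedge (f w) (f w') (f.map_adj_iff.2 h)⟩

theorem IsOddMinorOf.card_le [Fintype W] [Fintype V] (h : IsOddMinorOf H G) :
    Fintype.card W ≤ Fintype.card V := by
  obtain ⟨T, -, htree, hdisj, -, -⟩ := h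
  have : ∀ w, ∃ x, x ∈ (T w).verts := fun w =>
    let ⟨x⟩ := (htree w).connected.nonempty
    ⟨x, x.2⟩
  choose f hf using this
  refine Fintype.card_le_of_injective f fun w w' he => ?_
  by_contra hne
  exact Set.disjoint_left.mp (hdisj hne) (hf w) (he ▸ hf w')

theorem le_oddHadwiger [Fintype W] [Fintype V] (h : IsOddMinorOf (⊤ : SimpleGraph W) G) :
    Fintype.card W ≤ oddHadwiger G := by
  refine le_csSup ⟨Fintype.card V, fun r hr => ?_⟩ ?_
  · simpa using hr.card_le
  · exact h.comap (Embedding.completeGraph (Fintype.equivFin W).symm.toEmbedding)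

end OddMinor

section Construction

variable {α β : Type*}

def cliqueColouring [DecidableEq α] [DecidableEq β] (a₀ : α) (b₀ b₁ : β) (p : α × β) : Fin 2 :=
  if p.2 = b₀ then 0 else if p.2 = b₁ then 1 else if p.1 = a₀ then 0 else 1

theorem exists_adj_cliqueColouring_eq_pair_column [DecidableEq α] [DecidableEq β] {a₀ : α}
    {b₀ b₁ : β} (hb : b₀ ≠ b₁) (a : α) {b : β} (hb₀ : b ≠ b₀) (hb₁ : b ≠ b₁) :
    ∃ x ∈ ({(a, b₀), (a, b₁)} : Set (α × β)), ∃ y ∈ {p : α × β | p.2 = b},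
      (cartProd ⊤ ⊤).Adj x y ∧ cliqueColouring a₀ b₀ b₁ x = cliqueColouring a₀ b₀ b₁ y := by
  by_cases ha : a = a₀
  · exact ⟨(a, b₀), by simp, (a, b), rfl, by simp [cartProd, hb₀.symm],
      by simp [cliqueColouring, ha, hb₀, hb₁]⟩
  · exact ⟨(a, b₁), by simp, (a, b), rfl, by simp [cartProd, hb₁.symm],
      by simp [cliqueColouring, ha, hb₀, hb₁, hb.symm]⟩

theorem isOddMinorOf_cartProd_top (a₀ : α) {b₀ b₁ : β} (hb : b₀ ≠ b₁) :
    IsOddMinorOf (⊤ : SimpleGraph (α ⊕ {b // b ≠ b₀ ∧ b ≠ b₁}))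
      (cartProd (⊤ : SimpleGraph α) (⊤ : SimpleGraph β)) := by
  classical
  refine isOddMinorOf_of_stars
    (Sum.elim (fun a => {(a, b₀), (a, b₁)}) (fun b => {p | p.2 = b}))
    (Sum.elim (fun a => (a, b₀)) (fun b => (a₀, b))) (cliqueColouring a₀ b₀ b₁) ?_ ?_ ?_ ?_ ?_
  · rintro (a | b) <;> simp
  · rintro (a | b) ⟨a', b'⟩ hx hne <;>
      simp only [Sum.elim_inl, Sum.elim_inr, Set.mem_insert_iff, Set.mem_singleton_iff,
        Set.mem_ofPred_eq, ne_eq, Prod.mk.injEq] at hx hne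
    · obtain ⟨rfl, rfl⟩ := hx.resolve_left hne
      exact Or.inl ⟨rfl, hb⟩
    · exact Or.inr ⟨hx.symm, fun h => hne ⟨h.symm, hx⟩⟩
  · rintro (a | b) ⟨a', b'⟩ hx hne <;>
      simp only [Sum.elim_inl, Sum.elim_inr, Set.mem_insert_iff, Set.mem_singleton_iff,
        Set.mem_ofPred_eq, ne_eq, Prod.mk.injEq] at hx hne
    · obtain ⟨rfl, rfl⟩ := hx.resolve_left hne
      simp [cliqueColouring, hb.symm]
    · have ha' : a' ≠ a₀ := fun h => hne ⟨h, hx⟩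
      simp [cliqueColouring, hx, ha', b.2.1, b.2.2]
  · rintro (a | b) (a' | b') h <;>
      simp only [Sum.elim_inl, Sum.elim_inr, Set.disjoint_left,
        Set.mem_insert_iff, Set.mem_singleton_iff, Set.mem_ofPred_eq]
    · rintro _ (rfl | rfl) (h' | h') <;> simp_all
    · rintro _ (rfl | rfl) <;> simp [b'.2.1.symm, b'.2.2.symm]
    · rintro _ hx (rfl | rfl)
      exacts [b.2.1 hx.symm, b.2.2 hx.symm]
    · rintro _ hx hx'
      exact h (congrArg Sum.inr (Subtype.ext (hx.symm.trans hx')))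
  · rintro (a | b) (a' | b') h
    · exact ⟨(a, b₀), by simp, (a', b₀), by simp, by simpa [cartProd] using h,
        by simp [cliqueColouring]⟩
    · exact exists_adj_cliqueColouring_eq_pair_column hb a b'.2.1 b'.2.2
    · obtain ⟨x, hx, y, hy, hxy, hcxy⟩ :=
        exists_adj_cliqueColouring_eq_pair_column hb a' b.2.1 b.2.2
      exact ⟨y, hy, x, hx, hxy.symm, hcxy.symm⟩
    · refine ⟨(a₀, b), rfl, (a₀, b'), rfl, by simpa [cartProd, Subtype.ext_iff] using h, ?_⟩
      simp [cliqueColouring, b.2.1, b.2.2, b'.2.1, b'.2.2]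

end Construction

theorem Fintype.card_subtype_ne_and_ne {β : Type*} [Fintype β] [DecidableEq β] {b₀ b₁ : β}
    (hb : b₀ ≠ b₁) : Fintype.card {b // b ≠ b₀ ∧ b ≠ b₁} = Fintype.card β - 2 := by
  have : {b // b ≠ b₀ ∧ b ≠ b₁} ≃ {b // b ∉ ({b₀, b₁} : Finset β)} :=
    Equiv.subtypeEquivRight (by simp)
  rw [Fintype.card_congr this, Fintype.card_subtype_compl, Fintype.card_coe, Finset.card_pair hb]

theorem stmt_2 (s t : ℕ) (hs : 2 ≤ s) (ht : 2 ≤ t) :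
    oddHadwiger (cartProd (⊤ : SimpleGraph (Fin s)) (⊤ : SimpleGraph (Fin t))) ≥ s + t - 2 := by
  have hb : (⟨0, by omega⟩ : Fin t) ≠ ⟨1, by omega⟩ := by simp
  calc s + t - 2 = Fintype.card (Fin s ⊕ {b : Fin t // b ≠ ⟨0, by omega⟩ ∧ b ≠ ⟨1, by omega⟩}) := by
        rw [Fintype.card_sum, Fintype.card_subtype_ne_and_ne hb, Fintype.card_fin, Fintype.card_fin]
        omega
    _ ≤ _ := le_oddHadwiger (isOddMinorOf_cartProd_top ⟨0, by omega⟩ hb)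
end

section
/- For every integer t ≥ 6, the odd Hadwiger number of the direct product of the complete graphs K_t and K_3 satisfies oh(K_t × K_3) ≤ t + 2. -/
open SimpleGraph

/-!
Let `κ` be a proper 3-colouring of `G` and fix an odd `K_r` model. All one-vertex branch sets
carry the same colour `γ` (they are pairwise joined by monochromatic edges), and a branch set
with at most two vertices has at most one vertex of each colour; call its `γ`-vertex its root.
If two small branch sets have roots in the same `κ`-class, the monochromatic edge between them
cannot join the roots, so both have two vertices and their non-`γ` vertices are adjacent. Thus
each `κ`-class holds the roots of either a single one-vertex branch set or at most two
two-vertex ones (their other vertices are pairwise adjacent and avoid the class), so the total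
deficit `∑ (3 - |B_w|)` is at most `3 · 2`, giving `3 r ≤ |V| + 6`. The graph `K_t × K_3` is
3-coloured by its second coordinate and has `3 t` vertices.
-/

theorem SimpleGraph.Subgraph.adj_of_verts_eq_pair {V : Type*} {G : SimpleGraph V}
    {H : G.Subgraph} (hH : H.Connected) {x y : V} (hxy : x ≠ y) (hv : H.verts = {x, y}) :
    H.Adj x y := by
  have : Nontrivial H.verts := by
    rw [hv]
    exact (Set.nontrivial_pair hxy).coe_sort
  obtain ⟨u, hu⟩ := hH.preconnected.exists_adj_of_nontrivial ⟨x, by simp [hv]⟩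
  have hu' : u ∈ ({x, y} : Set V) := hv ▸ hu.snd_mem
  rcases hu' with rfl | rfl
  · exact absurd hu (H.loopless.irrefl _)
  · exact hu

theorem dirProd_colorable_of_colorable_right {α β : Type*} (G : SimpleGraph α)
    {H : SimpleGraph β} {n : ℕ} (hH : H.Colorable n) : (dirProd G H).Colorable n := by
  obtain ⟨C⟩ := hH
  exact ⟨Coloring.mk (fun p => C p.2) fun h => C.valid h.2⟩

/-- An odd `K_W`-minor model in `G`, with connected branch sets instead of trees. -/
structure OddCliqueModel (W : Type*) {V : Type*} (G : SimpleGraph V) where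
  branch : W → G.Subgraph
  color : V → Fin 2
  connected : ∀ w, (branch w).Connected
  pairwise_disjoint : Pairwise fun w w' => Disjoint (branch w).verts (branch w').verts
  color_ne : ∀ w x y, (branch w).Adj x y → color x ≠ color y
  exists_adj_color_eq : ∀ w w', w ≠ w' →
    ∃ x ∈ (branch w).verts, ∃ y ∈ (branch w').verts, G.Adj x y ∧ color x = color y

theorem IsOddMinorOf.nonempty_oddCliqueModel {W V : Type*} {G : SimpleGraph V}
    (h : IsOddMinorOf (⊤ : SimpleGraph W) G) : Nonempty (OddCliqueModel W G) := by
  obtain ⟨T, c, htree, hdisj, hcol, hedge⟩ := h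
  refine ⟨⟨T, c, fun w => ⟨(htree w).connected⟩, hdisj, hcol, fun w w' hne => ?_⟩⟩
  obtain ⟨x, y, hx, hy, hxy, hc⟩ := hedge w w' hne
  exact ⟨x, hx, y, hy, hxy, hc⟩

namespace OddCliqueModel

variable {W V : Type*} {G : SimpleGraph V} (M : OddCliqueModel W G)

theorem nonempty (w : W) : (M.branch w).verts.Nonempty := (M.connected w).nonempty

theorem color_eq_of_verts_eq_singleton {w w' : W} {x y : V} (hx : (M.branch w).verts = {x})
    (hy : (M.branch w').verts = {y}) : M.color x = M.color y := by
  by_cases hww : w = w'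
  · subst hww
    rw [Set.singleton_eq_singleton_iff.mp (hx.symm.trans hy)]
  · obtain ⟨x', hx', y', hy', -, hc⟩ := M.exists_adj_color_eq w w' hww
    rw [hx, Set.mem_singleton_iff] at hx'
    rw [hy, Set.mem_singleton_iff] at hy'
    rwa [← hx', ← hy']

theorem exists_color_of_verts_eq_singleton :
    ∃ γ, ∀ w x, (M.branch w).verts = {x} → M.color x = γ := by
  by_cases h : ∃ w x, (M.branch w).verts = {x}
  · obtain ⟨w, x, hx⟩ := h
    exact ⟨M.color x, fun w' y hy => M.color_eq_of_verts_eq_singleton hy hx⟩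
  · push Not at h
    exact ⟨0, fun w x hx => absurd hx (h w x)⟩

theorem exists_mem_color_eq {w : W} (hw : (M.branch w).verts.ncard = 2) (i : Fin 2) :
    ∃ x ∈ (M.branch w).verts, M.color x = i := by
  obtain ⟨x, y, hxy, hv⟩ := Set.ncard_eq_two.mp hw
  have hc := M.color_ne w x y (Subgraph.adj_of_verts_eq_pair (M.connected w) hxy hv)
  rcases (by decide : ∀ a b i : Fin 2, a ≠ b → a = i ∨ b = i) _ _ i hc with h | h
  · exact ⟨x, by simp [hv], h⟩
  · exact ⟨y, by simp [hv], h⟩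

section Finite

variable [Finite V]

theorem sum_ncard_le [Fintype W] : ∑ w, (M.branch w).verts.ncard ≤ Nat.card V := by
  rw [← finsum_eq_sum_of_fintype, ← Set.ncard_iUnion_of_finite (fun _ => Set.toFinite _)
    M.pairwise_disjoint]
  exact Set.ncard_le_card _

theorem adj_of_ncard_le_two {w : W} (hw : (M.branch w).verts.ncard ≤ 2) {x y : V}
    (hx : x ∈ (M.branch w).verts) (hy : y ∈ (M.branch w).verts) (hxy : x ≠ y) :
    (M.branch w).Adj x y := by
  refine Subgraph.adj_of_verts_eq_pair (M.connected w) hxy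
    (Set.eq_of_subset_of_ncard_le ?_ ?_ (Set.toFinite _)).symm
  · exact Set.insert_subset hx (Set.singleton_subset_iff.mpr hy)
  · rwa [Set.ncard_pair hxy]

theorem injOn_color {w : W} (hw : (M.branch w).verts.ncard ≤ 2) :
    Set.InjOn M.color (M.branch w).verts := fun x hx y hy hc => by
  by_contra hxy
  exact M.color_ne w x y (M.adj_of_ncard_le_two hw hx hy hxy) hc

end Finite

section VertexOfColor

variable [Nonempty V]

/-- A vertex of colour `i` in the branch set of `w`; junk if there is none. -/
noncomputable def vertexOfColor (w : W) (i : Fin 2) : V :=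
  Function.invFunOn M.color (M.branch w).verts i

theorem vertexOfColor_mem {w : W} (hw : (M.branch w).verts.ncard = 2) (i : Fin 2) :
    M.vertexOfColor w i ∈ (M.branch w).verts ∧ M.color (M.vertexOfColor w i) = i :=
  Function.invFunOn_pos (M.exists_mem_color_eq hw i)

variable [Finite V]

theorem vertexOfColor_color {w : W} (hw : (M.branch w).verts.ncard ≤ 2) {x : V}
    (hx : x ∈ (M.branch w).verts) : M.vertexOfColor w (M.color x) = x :=
  (M.injOn_color hw).leftInvOn_invFunOn hx

theorem adj_vertexOfColor_add_one {w : W} (hw : (M.branch w).verts.ncard = 2) (γ : Fin 2) :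
    G.Adj (M.vertexOfColor w γ) (M.vertexOfColor w (γ + 1)) := by
  obtain ⟨hx, hcx⟩ := M.vertexOfColor_mem hw γ
  obtain ⟨hy, hcy⟩ := M.vertexOfColor_mem hw (γ + 1)
  refine (M.adj_of_ncard_le_two hw.le hx hy fun h => ?_).adj_sub
  exact (by decide : ∀ a : Fin 2, a ≠ a + 1) γ
    (hcx.symm.trans ((congrArg M.color h).trans hcy))

theorem ncard_eq_two_and_adj_of_not_adj {γ : Fin 2}
    (hγ : ∀ w x, (M.branch w).verts = {x} → M.color x = γ) {w w' : W}
    (hw : (M.branch w).verts.ncard ≤ 2) (hw' : (M.branch w').verts.ncard ≤ 2) (hne : w ≠ w')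
    (hnadj : ¬ G.Adj (M.vertexOfColor w γ) (M.vertexOfColor w' γ)) :
    (M.branch w).verts.ncard = 2 ∧
      G.Adj (M.vertexOfColor w (γ + 1)) (M.vertexOfColor w' (γ + 1)) := by
  obtain ⟨x, hx, y, hy, hxy, hc⟩ := M.exists_adj_color_eq w w' hne
  have hx' := M.vertexOfColor_color hw hx
  have hy' := M.vertexOfColor_color hw' hy
  have hcx : M.color x ≠ γ := by
    rintro rfl
    rw [hx', hc, hy'] at hnadj
    exact hnadj hxy
  refine ⟨?_, ?_⟩
  · have hpos : 0 < (M.branch w).verts.ncard := (Set.ncard_pos (Set.toFinite _)).mpr ⟨x, hx⟩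
    have hne1 : (M.branch w).verts.ncard ≠ 1 := fun h1 => by
      obtain ⟨z, hz⟩ := Set.ncard_eq_one.mp h1
      rw [hz, Set.mem_singleton_iff] at hx
      exact hcx (hx ▸ hγ w z hz)
    omega
  · have hγ1 : γ + 1 = M.color x := (by decide : ∀ a b : Fin 2, a ≠ b → b + 1 = a) _ _ hcx
    rwa [hγ1, hx', hc, hy']

theorem sum_deficit_fiber_le [Fintype W] (κ : G.Coloring (Fin 3)) {γ : Fin 2}
    (hγ : ∀ w x, (M.branch w).verts = {x} → M.color x = γ) (a : Fin 3) :
    ∑ w with κ (M.vertexOfColor w γ) = a, (3 - (M.branch w).verts.ncard) ≤ 2 := by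
  classical
  rw [← Finset.sum_filter_ne_zero]
  set F := (Finset.univ.filter fun w => κ (M.vertexOfColor w γ) = a).filter
    fun w => 3 - (M.branch w).verts.ncard ≠ 0
  have hF : ∀ w ∈ F, κ (M.vertexOfColor w γ) = a ∧ (M.branch w).verts.ncard ≤ 2 := by
    intro w hw
    simp only [F, Finset.mem_filter, Finset.mem_univ, true_and] at hw
    exact ⟨hw.1, by omega⟩
  have key : ∀ w ∈ F, ∀ w' ∈ F, w ≠ w' → (M.branch w).verts.ncard = 2 ∧
      G.Adj (M.vertexOfColor w (γ + 1)) (M.vertexOfColor w' (γ + 1)) := fun w hw w' hw' hne =>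
    M.ncard_eq_two_and_adj_of_not_adj hγ (hF w hw).2 (hF w' hw').2 hne
      fun h => κ.valid h ((hF w hw).1.trans (hF w' hw').1.symm)
  by_cases hpairs : ∀ w ∈ F, (M.branch w).verts.ncard = 2
  · calc ∑ w ∈ F, (3 - (M.branch w).verts.ncard) = F.card := by
          rw [Finset.card_eq_sum_ones]
          exact Finset.sum_congr rfl fun w hw => by rw [hpairs w hw]
      _ ≤ (Finset.univ.erase a).card := by
          refine Finset.card_le_card_of_injOn (fun w => κ (M.vertexOfColor w (γ + 1)))
            (fun w hw => ?_) (fun w hw w' hw' h => ?_)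
          · refine Finset.mem_erase.mpr ⟨fun h => ?_, Finset.mem_univ _⟩
            exact κ.valid (M.adj_vertexOfColor_add_one (hpairs w hw) γ) ((hF w hw).1.trans h.symm)
          · by_contra hne
            exact κ.valid (key w hw w' hw' hne).2 h
      _ = 2 := by simp
  · push Not at hpairs
    obtain ⟨s, hs, hs2⟩ := hpairs
    have hFs : F ⊆ {s} := fun w hw => by
      by_contra hne
      exact hs2 (key s hs w hw fun h => hne (by simp [h])).1
    have hs1 : 0 < (M.branch s).verts.ncard := (Set.ncard_pos (Set.toFinite _)).mpr (M.nonempty s)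
    calc ∑ w ∈ F, (3 - (M.branch w).verts.ncard)
        ≤ ∑ w ∈ {s}, (3 - (M.branch w).verts.ncard) := Finset.sum_le_sum_of_subset hFs
      _ ≤ 2 := by rw [Finset.sum_singleton]; omega

theorem sum_deficit_le [Fintype W] (κ : G.Coloring (Fin 3)) {γ : Fin 2}
    (hγ : ∀ w x, (M.branch w).verts = {x} → M.color x = γ) :
    ∑ w, (3 - (M.branch w).verts.ncard) ≤ 6 := by
  rw [← Finset.sum_fiberwise Finset.univ fun w => κ (M.vertexOfColor w γ)]
  calc _ ≤ ∑ _a : Fin 3, 2 := Finset.sum_le_sum fun a _ => M.sum_deficit_fiber_le κ hγ a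
    _ = 6 := by simp

end VertexOfColor

end OddCliqueModel

theorem OddCliqueModel.three_mul_card_le {W V : Type*} [Fintype W] [Fintype V]
    {G : SimpleGraph V} (M : OddCliqueModel W G) (hG : G.Colorable 3) :
    3 * Fintype.card W ≤ Fintype.card V + 6 := by
  rcases isEmpty_or_nonempty W with _ | ⟨⟨w⟩⟩
  · simp
  have : Nonempty V := ⟨(M.nonempty w).some⟩
  obtain ⟨κ⟩ := hG
  obtain ⟨γ, hγ⟩ := M.exists_color_of_verts_eq_singleton
  calc 3 * Fintype.card W = ∑ _w : W, 3 := by simp [mul_comm]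
    _ ≤ ∑ w, ((M.branch w).verts.ncard + (3 - (M.branch w).verts.ncard)) :=
        Finset.sum_le_sum fun _ _ => by omega
    _ = ∑ w, (M.branch w).verts.ncard + ∑ w, (3 - (M.branch w).verts.ncard) :=
        Finset.sum_add_distrib
    _ ≤ Fintype.card V + 6 := by
        gcongr
        · exact Nat.card_eq_fintype_card (α := V) ▸ M.sum_ncard_le
        · exact M.sum_deficit_le κ hγ

theorem oddHadwiger_le_of_colorable_three {V : Type*} [Fintype V] {G : SimpleGraph V}
    (hG : G.Colorable 3) : oddHadwiger G ≤ (Fintype.card V + 6) / 3 := by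
  refine csSup_le' fun r hr => ?_
  obtain ⟨M⟩ := IsOddMinorOf.nonempty_oddCliqueModel hr
  have := M.three_mul_card_le hG
  rw [Fintype.card_fin] at this
  omega

theorem stmt_10_general (t : ℕ) :
    oddHadwiger (dirProd (⊤ : SimpleGraph (Fin t)) (⊤ : SimpleGraph (Fin 3))) ≤ t + 2 := by
  have hcol := dirProd_colorable_of_colorable_right (⊤ : SimpleGraph (Fin t))
    ⟨(⊤ : SimpleGraph (Fin 3)).selfColoring⟩
  calc _ ≤ (Fintype.card (Fin t × Fin 3) + 6) / 3 := oddHadwiger_le_of_colorable_three hcol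
    _ = t + 2 := by simp only [Fintype.card_prod, Fintype.card_fin]; omega

theorem stmt_10 (t : ℕ) (ht : 6 ≤ t) :
    oddHadwiger (dirProd (⊤ : SimpleGraph (Fin t)) (⊤ : SimpleGraph (Fin 3))) ≤ t + 2 :=
  stmt_10_general t
end

section
/- Let G and H be connected graphs, let S_1, …, S_s be pairwise vertex-disjoint trees in G forming, together with a 2-colouring c_G of V(G), an odd expansion of K_s in G, and let T_1, …, T_t be pairwise vertex-disjoint trees in H forming, together with a 2-colouring c_H of V(H), an odd expansion of K_t in H. For each i ∈ {1,…,s} and j ∈ {1,…,t}, let 𝒯_{ij} be a spanning tree of the (connected) Cartesian product S_i □ T_j, and define a 2-colouring c_1 on the union of the vertex sets of all 𝒯_{ij} by c_1((u,v)) = 1 if c_G(u) = c_H(v) and c_1((u,v)) = 2 otherwise. Then c_1 is a proper colouring of each tree 𝒯_{ij}; moreover, for any two distinct pairs (i,j), (i',j') ∈ {1,…,s} × {1,…,t} with i = i' or j = j', there exists an edge of G □ H between 𝒯_{ij} and 𝒯_{i'j'} whose two endpoints receive the same colour under c_1. -/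
open SimpleGraph

/-- The Cartesian product of a subgraph `A` of `G` and a subgraph `B` of `H`, viewed as a
subgraph of `cartProd G H`. -/
def cartProdSub {α β : Type*} {G : SimpleGraph α} {H : SimpleGraph β}
    (A : G.Subgraph) (B : H.Subgraph) : (cartProd G H).Subgraph where
  verts := A.verts ×ˢ B.verts
  Adj x y := (x.1 = y.1 ∧ x.1 ∈ A.verts ∧ B.Adj x.2 y.2) ∨
    (x.2 = y.2 ∧ x.2 ∈ B.verts ∧ A.Adj x.1 y.1)
  adj_sub := by
    rintro x y (⟨h1, _, h3⟩ | ⟨h1, _, h3⟩)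
    · exact Or.inl ⟨h1, B.adj_sub h3⟩
    · exact Or.inr ⟨h1, A.adj_sub h3⟩
  edge_vert := by
    rintro x y (⟨h1, h2, h3⟩ | ⟨h1, h2, h3⟩)
    · exact ⟨h2, B.edge_vert h3⟩
    · exact ⟨A.edge_vert h3, h2⟩
  symm := by
    constructor
    rintro x y (⟨h1, h2, h3⟩ | ⟨h1, h2, h3⟩)
    · exact Or.inl ⟨h1.symm, h1 ▸ h2, h3.symm⟩
    · exact Or.inr ⟨h1.symm, h1 ▸ h2, h3.symm⟩

/-!
An edge of `S i □ T j` changes exactly one coordinate, along an edge of a properly coloured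
tree, so it changes the parity colouring. A monochromatic edge `y y'` between `T j` and `T j'`
lifts to the monochromatic edge `(u, y) (u, y')` for any `u` in the nonempty tree `S i`, and
symmetrically in the other coordinate.
-/

/-- The colouring of `V × W` by the parity of `cG u + cH v`. -/
def prodColouring {V W : Type*} (cG : V → Fin 2) (cH : W → Fin 2) (p : V × W) : Fin 2 :=
  if cG p.1 = cH p.2 then 0 else 1

section ProdColouring

variable {V W : Type*} {G : SimpleGraph V} {H : SimpleGraph W} {cG : V → Fin 2} {cH : W → Fin 2}

theorem prodColouring_eq_iff {p q : V × W} :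
    prodColouring cG cH p = prodColouring cG cH q ↔ (cG p.1 = cG q.1 ↔ cH p.2 = cH q.2) := by
  unfold prodColouring
  generalize cG p.1 = a, cG q.1 = b, cH p.2 = c, cH q.2 = d
  revert a b c d
  decide

theorem cartProdSub_adj_prodColouring_ne {A : G.Subgraph} {B : H.Subgraph}
    (hA : ∀ x y, A.Adj x y → cG x ≠ cG y) (hB : ∀ x y, B.Adj x y → cH x ≠ cH y)
    {p q : V × W} (hpq : (cartProdSub A B).Adj p q) :
    prodColouring cG cH p ≠ prodColouring cG cH q := by
  rw [Ne, prodColouring_eq_iff]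
  rcases hpq with ⟨h1, -, h2⟩ | ⟨h2, -, h1⟩
  · simpa [h1] using hB _ _ h2
  · simpa [h2] using hA _ _ h1

theorem exists_monochromatic_edge_cartProdSub_of_right {A : G.Subgraph} {B B' : H.Subgraph}
    (hA : A.verts.Nonempty)
    (hBB' : ∃ y y', y ∈ B.verts ∧ y' ∈ B'.verts ∧ H.Adj y y' ∧ cH y = cH y') :
    ∃ p q, p ∈ (cartProdSub A B).verts ∧ q ∈ (cartProdSub A B').verts ∧
      (cartProd G H).Adj p q ∧ prodColouring cG cH p = prodColouring cG cH q := by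
  obtain ⟨u, hu⟩ := hA
  obtain ⟨y, y', hy, hy', hadj, hc⟩ := hBB'
  exact ⟨(u, y), (u, y'), ⟨hu, hy⟩, ⟨hu, hy'⟩, Or.inl ⟨rfl, hadj⟩,
    prodColouring_eq_iff.mpr (by simp [hc])⟩

theorem exists_monochromatic_edge_cartProdSub_of_left {A A' : G.Subgraph} {B : H.Subgraph}
    (hB : B.verts.Nonempty)
    (hAA' : ∃ x x', x ∈ A.verts ∧ x' ∈ A'.verts ∧ G.Adj x x' ∧ cG x = cG x') :
    ∃ p q, p ∈ (cartProdSub A B).verts ∧ q ∈ (cartProdSub A' B).verts ∧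
      (cartProd G H).Adj p q ∧ prodColouring cG cH p = prodColouring cG cH q := by
  obtain ⟨v, hv⟩ := hB
  obtain ⟨x, x', hx, hx', hadj, hc⟩ := hAA'
  exact ⟨(x, v), (x', v), ⟨hx, hv⟩, ⟨hx', hv⟩, Or.inr ⟨rfl, hadj⟩,
    prodColouring_eq_iff.mpr (by simp [hc])⟩

end ProdColouring

theorem stmt_14_general {V W : Type*}
    (G : SimpleGraph V) (H : SimpleGraph W)
    (s t : ℕ)
    -- an odd expansion of `K_s` in `G`, witnessed by trees `S i` and 2-colouring `cG`
    (S : Fin s → G.Subgraph) (cG : V → Fin 2)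
    (hStree : ∀ i, (S i).coe.IsTree)
    (hSprop : ∀ i, ∀ x y, (S i).Adj x y → cG x ≠ cG y)
    (hSmono : ∀ i i' : Fin s, i ≠ i' →
      ∃ x y, x ∈ (S i).verts ∧ y ∈ (S i').verts ∧ G.Adj x y ∧ cG x = cG y)
    -- an odd expansion of `K_t` in `H`, witnessed by trees `T j` and 2-colouring `cH`
    (T : Fin t → H.Subgraph) (cH : W → Fin 2)
    (hTtree : ∀ j, (T j).coe.IsTree)
    (hTprop : ∀ j, ∀ x y, (T j).Adj x y → cH x ≠ cH y)
    (hTmono : ∀ j j' : Fin t, j ≠ j' →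
      ∃ x y, x ∈ (T j).verts ∧ y ∈ (T j').verts ∧ H.Adj x y ∧ cH x = cH y)
    -- for each `i, j`, a spanning tree `TT i j` of `S i □ T j`
    (TT : Fin s → Fin t → (cartProd G H).Subgraph)
    (hTTle : ∀ i j, TT i j ≤ cartProdSub (S i) (T j))
    (hTTverts : ∀ i j, (TT i j).verts = (S i).verts ×ˢ (T j).verts)
    -- the 2-colouring `c1`
    (c1 : V × W → Fin 2)
    (hc1 : ∀ p : V × W, c1 p = if cG p.1 = cH p.2 then 0 else 1) :
    (∀ i j, ∀ x y, (TT i j).Adj x y → c1 x ≠ c1 y) ∧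
    (∀ i j i' j', (i, j) ≠ (i', j') → (i = i' ∨ j = j') →
      ∃ x y, x ∈ (TT i j).verts ∧ y ∈ (TT i' j').verts ∧
        (cartProd G H).Adj x y ∧ c1 x = c1 y) := by
  obtain rfl : c1 = prodColouring cG cH := funext hc1
  refine ⟨fun i j x y hxy => cartProdSub_adj_prodColouring_ne (hSprop i) (hTprop j)
    ((hTTle i j).2 hxy), ?_⟩
  rintro i j i' j' hne (rfl | rfl)
  · simp only [hTTverts]
    exact exists_monochromatic_edge_cartProdSub_of_right
      (Set.nonempty_coe_sort.mp (hStree i).connected.nonempty)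
      (hTmono j j' fun h => hne (h ▸ rfl))
  · simp only [hTTverts]
    exact exists_monochromatic_edge_cartProdSub_of_left
      (Set.nonempty_coe_sort.mp (hTtree j).connected.nonempty)
      (hSmono i i' fun h => hne (h ▸ rfl))

theorem stmt_14 {V W : Type*} [Fintype V] [Fintype W]
    (G : SimpleGraph V) (H : SimpleGraph W)
    (hG : G.Connected) (hH : H.Connected) (s t : ℕ)
    -- an odd expansion of `K_s` in `G`, witnessed by trees `S i` and 2-colouring `cG`
    (S : Fin s → G.Subgraph) (cG : V → Fin 2)
    (hStree : ∀ i, (S i).coe.IsTree)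
    (hSdisj : Pairwise fun i i' => Disjoint (S i).verts (S i').verts)
    (hSprop : ∀ i, ∀ x y, (S i).Adj x y → cG x ≠ cG y)
    (hSmono : ∀ i i' : Fin s, i ≠ i' →
      ∃ x y, x ∈ (S i).verts ∧ y ∈ (S i').verts ∧ G.Adj x y ∧ cG x = cG y)
    -- an odd expansion of `K_t` in `H`, witnessed by trees `T j` and 2-colouring `cH`
    (T : Fin t → H.Subgraph) (cH : W → Fin 2)
    (hTtree : ∀ j, (T j).coe.IsTree)
    (hTdisj : Pairwise fun j j' => Disjoint (T j).verts (T j').verts)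
    (hTprop : ∀ j, ∀ x y, (T j).Adj x y → cH x ≠ cH y)
    (hTmono : ∀ j j' : Fin t, j ≠ j' →
      ∃ x y, x ∈ (T j).verts ∧ y ∈ (T j').verts ∧ H.Adj x y ∧ cH x = cH y)
    -- for each `i, j`, a spanning tree `TT i j` of `S i □ T j`
    (TT : Fin s → Fin t → (cartProd G H).Subgraph)
    (hTTle : ∀ i j, TT i j ≤ cartProdSub (S i) (T j))
    (hTTverts : ∀ i j, (TT i j).verts = (S i).verts ×ˢ (T j).verts)
    (hTTtree : ∀ i j, (TT i j).coe.IsTree)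
    -- the 2-colouring `c1`
    (c1 : V × W → Fin 2)
    (hc1 : ∀ p : V × W, c1 p = if cG p.1 = cH p.2 then 0 else 1) :
    (∀ i j, ∀ x y, (TT i j).Adj x y → c1 x ≠ c1 y) ∧
    (∀ i j i' j', (i, j) ≠ (i', j') → (i = i' ∨ j = j') →
      ∃ x y, x ∈ (TT i j).verts ∧ y ∈ (TT i' j').verts ∧
        (cartProd G H).Adj x y ∧ c1 x = c1 y) :=
  stmt_14_general G H s t S cG hStree hSprop hSmono T cH hTtree hTprop hTmono TT hTTle hTTverts c1
    hc1
end
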